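/- Assume μ₂ ≥ μ₁. Then for every (i,k,ℓ) ∈ X_diff, D(i,k,ℓ) ≤ i·c + b; that is, D is globally bounded above by the affine function i ↦ i·c + b. -/

import Mathlib

/-
On the line `k + ℓ = C₁` the difference satisfies the sharper bound `D(i,k,ℓ) ≤ i·c + β(ℓ)`, where
`β(ℓ) = h₁/μ₁ - (ℓ+1)·h₂/(min(ℓ+1,C₂)·μ₂)` is the exact value of `D` on the layer `i = 0`
(there `v` has a closed form); `β` is decreasing with `β(0) = b`. The bound goes by induction on
`i`: subtracting the Bellman equations of two neighbouring states and writing each `min` as one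
argument plus the signed part of a neighbouring difference, `D(i+1,·)` is bounded by a combination
of the bounds at level `i`. What remains is a rational inequality whose gap is an explicit
fraction, nonnegative because `μ₁ ≤ μ₂`; it is checked separately for `ℓ < C₂` and `ℓ ≥ C₂`.
-/

/-- Overall service rate `d(k,ℓ) = k·μ₁ + min(ℓ,C₂)·μ₂`. -/
noncomputable def dRate (C₂ : ℕ) (μ₁ μ₂ : ℝ) (k ℓ : ℕ) : ℝ :=
  (k : ℝ) * μ₁ + ((min ℓ C₂ : ℕ) : ℝ) * μ₂

/-- Membership of `(i,k,ℓ)` in the state space `X`. -/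
def memX (C₁ : ℕ) (i k ℓ : ℕ) : Prop :=
  (i = 0 ∧ k + ℓ < C₁) ∨ k + ℓ = C₁

/-- `v` satisfies the optimality (Bellman) equations of the clearing system.
Terms whose coefficient `k·μ₁` or `min(ℓ,C₂)·μ₂` vanishes contribute `0`,
matching the convention that such summands are omitted. -/
def IsValue (C₁ C₂ : ℕ) (μ₁ μ₂ h₀ h₁ h₂ : ℝ) (v : ℕ → ℕ → ℕ → ℝ) : Prop :=
  v 0 0 0 = 0 ∧
  (∀ k ℓ : ℕ, k + ℓ ≤ C₁ → ¬(k = 0 ∧ ℓ = 0) →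
    v 0 k ℓ = ((k : ℝ) * h₁ + (ℓ : ℝ) * h₂) / dRate C₂ μ₁ μ₂ k ℓ
      + ((k : ℝ) * μ₁ / dRate C₂ μ₁ μ₂ k ℓ) * v 0 (k - 1) ℓ
      + (((min ℓ C₂ : ℕ) : ℝ) * μ₂ / dRate C₂ μ₁ μ₂ k ℓ) * v 0 k (ℓ - 1)) ∧
  (∀ i k ℓ : ℕ, k + ℓ = C₁ →
    v (i + 1) k ℓ =
      (((i : ℝ) + 1) * h₀ + (k : ℝ) * h₁ + (ℓ : ℝ) * h₂) / dRate C₂ μ₁ μ₂ k ℓ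
      + ((k : ℝ) * μ₁ / dRate C₂ μ₁ μ₂ k ℓ) *
          min (v i k ℓ) (v i (k - 1) (ℓ + 1))
      + (((min ℓ C₂ : ℕ) : ℝ) * μ₂ / dRate C₂ μ₁ μ₂ k ℓ) *
          min (v i (k + 1) (ℓ - 1)) (v i k ℓ))

/-- The difference `D(i,k,ℓ) = v(i,k,ℓ) − v(i,k−1,ℓ+1)`. -/
noncomputable def Dv (v : ℕ → ℕ → ℕ → ℝ) (i k ℓ : ℕ) : ℝ :=
  v i k ℓ - v i (k - 1) (ℓ + 1)

open Finset

/-- Difference of the Bellman updates at `(k+1, ℓ)` and `(k, ℓ+1)`, with `a = v(k+1,ℓ)`,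
`b = v(k,ℓ+1)`, outer neighbours `y = v(k+2,ℓ-1)`, `z = v(k-1,ℓ+2)` and transition
probabilities `p, q`. -/
theorem bellman_diff_le {α : Type*} [CommRing α] [LinearOrder α] [IsStrictOrderedRing α]
    {p₁ q₁ p₂ q₂ a b y z β β' : α}
    (hpq₁ : p₁ + q₁ = 1) (hpq₂ : p₂ + q₂ = 1) (hq₁ : 0 ≤ q₁) (hp₂ : 0 ≤ p₂)
    (hx : a - b ≤ β) (hy : 0 < q₁ → y - a ≤ β') (hz : 0 < p₂ → b - z ≤ β) (hββ' : β ≤ β') :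
    (p₁ * min a b + q₁ * min y a) - (p₂ * min b z + q₂ * min a b) ≤ p₂ * β + q₁ * β' := by
  have hy' : q₁ * min (y - a) 0 ≤ q₁ * min β' 0 := by
    rcases hq₁.eq_or_lt with h | h
    · simp [← h]
    · gcongr; exact hy h
  have hz' : p₂ * max (b - z) 0 ≤ p₂ * max β 0 := by
    rcases hp₂.eq_or_lt with h | h
    · simp [← h]
    · gcongr; exact hz h
  have hβ : max β 0 + min β' 0 ≤ β' := by
    rcases le_total β 0 with h | h
    · simp [max_eq_right h]
    · simp [max_eq_left h, min_eq_right (h.trans hββ'), hββ']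
  have hab : min a b = b + min (a - b) 0 := by rw [← min_add_add_left]; simp
  have hya : min y a = a + min (y - a) 0 := by rw [← min_add_add_left]; simp
  have hbz : min b z = b - max (b - z) 0 := by rw [← min_sub_sub_left]; simp [min_comm]
  calc (p₁ * min a b + q₁ * min y a) - (p₂ * min b z + q₂ * min a b)
      = p₂ * min (a - b) 0 + q₁ * max (a - b) 0 + q₁ * min (y - a) 0 + p₂ * max (b - z) 0 := by
        rw [hab, hya, hbz]
        linear_combination (b + min (a - b) 0) * hpq₁ - (b + min (a - b) 0) * hpq₂
          - q₁ * min_add_max (a - b) 0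
    _ ≤ p₂ * (min β 0 + max β 0) + q₁ * (max β 0 + min β' 0) := by
        have : p₂ * min (a - b) 0 + q₁ * max (a - b) 0 ≤ p₂ * min β 0 + q₁ * max β 0 := by gcongr
        linarith
    _ ≤ p₂ * β + q₁ * β' := by rw [min_add_max, add_zero]; gcongr

section baseDiff

variable {C₂ : ℕ} {μ₁ μ₂ h₁ h₂ : ℝ}

noncomputable def baseValue (C₂ : ℕ) (μ₁ μ₂ h₁ h₂ : ℝ) (k ℓ : ℕ) : ℝ :=
  k * h₁ / μ₁ + ∑ j ∈ range ℓ, ((j : ℝ) + 1) * h₂ / ((min (j + 1) C₂ : ℕ) * μ₂)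

noncomputable def baseDiff (C₂ : ℕ) (μ₁ μ₂ h₁ h₂ : ℝ) (ℓ : ℕ) : ℝ :=
  h₁ / μ₁ - ((ℓ : ℝ) + 1) * h₂ / ((min (ℓ + 1) C₂ : ℕ) * μ₂)

theorem baseValue_succ_sub (k ℓ : ℕ) :
    baseValue C₂ μ₁ μ₂ h₁ h₂ (k + 1) ℓ - baseValue C₂ μ₁ μ₂ h₁ h₂ k (ℓ + 1)
      = baseDiff C₂ μ₁ μ₂ h₁ h₂ ℓ := by
  rw [baseValue, baseValue, sum_range_succ, baseDiff]
  push_cast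
  ring

theorem mul_baseValue_pred_left (hμ₁ : μ₁ ≠ 0) (k ℓ : ℕ) :
    k * μ₁ * baseValue C₂ μ₁ μ₂ h₁ h₂ (k - 1) ℓ
      = k * μ₁ * baseValue C₂ μ₁ μ₂ h₁ h₂ k ℓ - k * h₁ := by
  rcases k with _ | k
  · simp
  · simp only [baseValue, Nat.add_sub_cancel, Nat.cast_add, Nat.cast_one]
    generalize (∑ j ∈ range ℓ, _ : ℝ) = S
    field_simp
    ring

theorem mul_baseValue_pred_right (hC₂ : 1 ≤ C₂) (hμ₂ : μ₂ ≠ 0) (k ℓ : ℕ) :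
    (min ℓ C₂ : ℕ) * μ₂ * baseValue C₂ μ₁ μ₂ h₁ h₂ k (ℓ - 1)
      = (min ℓ C₂ : ℕ) * μ₂ * baseValue C₂ μ₁ μ₂ h₁ h₂ k ℓ - ℓ * h₂ := by
  rcases ℓ with _ | ℓ
  · simp
  · have hm : ((min (ℓ + 1) C₂ : ℕ) : ℝ) ≠ 0 := by positivity
    simp only [baseValue, Nat.add_sub_cancel, sum_range_succ, Nat.cast_add, Nat.cast_one]
    generalize (∑ j ∈ range ℓ, _ : ℝ) = S
    field_simp
    ring

theorem baseDiff_of_le {ℓ : ℕ} (h : ℓ + 1 ≤ C₂) :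
    baseDiff C₂ μ₁ μ₂ h₁ h₂ ℓ = h₁ / μ₁ - h₂ / μ₂ := by
  rw [baseDiff, min_eq_left h]
  push_cast
  rw [mul_div_mul_left _ _ (by positivity)]

theorem baseDiff_of_ge {ℓ : ℕ} (h : C₂ ≤ ℓ + 1) :
    baseDiff C₂ μ₁ μ₂ h₁ h₂ ℓ = h₁ / μ₁ - ((ℓ : ℝ) + 1) * h₂ / (C₂ * μ₂) := by
  rw [baseDiff, min_eq_right h]

theorem baseDiff_antitone (hμ₂ : 0 ≤ μ₂) (hh₂ : 0 ≤ h₂) :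
    Antitone (baseDiff C₂ μ₁ μ₂ h₁ h₂) := by
  refine antitone_nat_of_succ_le fun ℓ => ?_
  rcases le_or_gt (ℓ + 2) C₂ with h | h
  · rw [baseDiff_of_le h, baseDiff_of_le (by omega)]
  · rw [baseDiff_of_ge (by omega), baseDiff_of_ge (by omega)]
    push_cast
    gcongr
    linarith

theorem baseDiff_le (hC₂ : 1 ≤ C₂) (hμ₂ : 0 ≤ μ₂) (hh₂ : 0 ≤ h₂) (ℓ : ℕ) :
    baseDiff C₂ μ₁ μ₂ h₁ h₂ ℓ ≤ h₁ / μ₁ - h₂ / μ₂ :=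
  baseDiff_of_le (ℓ := 0) hC₂ ▸ baseDiff_antitone hμ₂ hh₂ (Nat.zero_le ℓ)

end baseDiff

theorem dRate_pos {C₂ : ℕ} {μ₁ μ₂ : ℝ} (hC₂ : 1 ≤ C₂) (hμ₁ : 0 < μ₁) (hμ₂ : 0 < μ₂) {k ℓ : ℕ}
    (h : k ≠ 0 ∨ ℓ ≠ 0) : 0 < dRate C₂ μ₁ μ₂ k ℓ := by
  unfold dRate
  rcases h with h | h
  · have : 0 < k := Nat.pos_of_ne_zero h
    positivity
  · have : 0 < min ℓ C₂ := by omega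
    positivity

theorem dRate_coeff_add {C₂ : ℕ} {μ₁ μ₂ : ℝ} {k ℓ : ℕ} (h : dRate C₂ μ₁ μ₂ k ℓ ≠ 0) :
    (k : ℝ) * μ₁ / dRate C₂ μ₁ μ₂ k ℓ + ((min ℓ C₂ : ℕ) : ℝ) * μ₂ / dRate C₂ μ₁ μ₂ k ℓ = 1 := by
  rw [← add_div]
  exact div_self h

theorem diffBound_step_unsaturated {K L I μ₁ μ₂ h₀ h₁ h₂ : ℝ} (hK : 0 ≤ K) (hL : 0 ≤ L)
    (hμ₁ : 0 < μ₁) (hμ : μ₁ ≤ μ₂) (hh₀ : 0 ≤ h₀) :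
    ((I + 1) * h₀ + (K + 1) * h₁ + L * h₂) / ((K + 1) * μ₁ + L * μ₂)
      - ((I + 1) * h₀ + K * h₁ + (L + 1) * h₂) / (K * μ₁ + (L + 1) * μ₂)
      + (K * μ₁ / (K * μ₁ + (L + 1) * μ₂) + L * μ₂ / ((K + 1) * μ₁ + L * μ₂))
        * (I * (h₀ / (K + 1 + L) * (1 / μ₁ - 1 / μ₂)) + (h₁ / μ₁ - h₂ / μ₂))
    ≤ (I + 1) * (h₀ / (K + 1 + L) * (1 / μ₁ - 1 / μ₂)) + (h₁ / μ₁ - h₂ / μ₂) := by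
  obtain ⟨δ, hδ, rfl⟩ : ∃ δ, 0 ≤ δ ∧ μ₂ = μ₁ + δ := ⟨μ₂ - μ₁, by linarith, by ring⟩
  rw [← sub_nonneg]
  convert (show 0 ≤ h₀ * δ * (K * μ₁ * ((K + 1) * μ₁ + L * (μ₁ + δ))
      + L * (μ₁ + δ) * (K * μ₁ + (L + 1) * (μ₁ + δ))) / ((K + 1 + L) * μ₁ * (μ₁ + δ)
      * ((K + 1) * μ₁ + L * (μ₁ + δ)) * (K * μ₁ + (L + 1) * (μ₁ + δ))) by positivity) using 1
  field_simp
  ring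

theorem diffBound_step_saturated {K L I C μ₁ μ₂ h₀ h₁ h₂ : ℝ} (hK : 0 ≤ K) (hI : 0 ≤ I)
    (hC : 0 < C) (hCL : C ≤ L) (hμ₁ : 0 < μ₁) (hμ : μ₁ ≤ μ₂) (hh₀ : 0 ≤ h₀) :
    ((I + 1) * h₀ + (K + 1) * h₁ + L * h₂) / ((K + 1) * μ₁ + C * μ₂)
      - ((I + 1) * h₀ + K * h₁ + (L + 1) * h₂) / (K * μ₁ + C * μ₂)
      + K * μ₁ / (K * μ₁ + C * μ₂)
        * (I * (h₀ / (K + 1 + L) * (1 / μ₁ - 1 / μ₂)) + (h₁ / μ₁ - (L + 1) * h₂ / (C * μ₂)))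
      + C * μ₂ / ((K + 1) * μ₁ + C * μ₂)
        * (I * (h₀ / (K + 1 + L) * (1 / μ₁ - 1 / μ₂)) + (h₁ / μ₁ - L * h₂ / (C * μ₂)))
    ≤ (I + 1) * (h₀ / (K + 1 + L) * (1 / μ₁ - 1 / μ₂)) + (h₁ / μ₁ - (L + 1) * h₂ / (C * μ₂)) := by
  obtain ⟨δ, hδ, rfl⟩ : ∃ δ, 0 ≤ δ ∧ μ₂ = μ₁ + δ := ⟨μ₂ - μ₁, by linarith, by ring⟩
  have hL : 0 < L := hC.trans_le hCL
  rw [← sub_nonneg]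
  convert (show 0 ≤ h₀ * (δ * ((K + 1) * μ₁ + C * (μ₁ + δ)) * (K * μ₁ + C * (μ₁ + δ))
      + I * δ * (C * μ₁ * (μ₁ + δ)) + (I + 1) * (K + 1 + L) * μ₁ * μ₁ * (μ₁ + δ))
      / ((K + 1 + L) * μ₁ * (μ₁ + δ) * ((K + 1) * μ₁ + C * (μ₁ + δ)) * (K * μ₁ + C * (μ₁ + δ)))
      by positivity) using 1
  field_simp
  ring

noncomputable def diffBound (C₁ C₂ : ℕ) (μ₁ μ₂ h₀ h₁ h₂ : ℝ) (i ℓ : ℕ) : ℝ :=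
  i * (h₀ / C₁ * (1 / μ₁ - 1 / μ₂)) + baseDiff C₂ μ₁ μ₂ h₁ h₂ ℓ

theorem diffBound_antitone {C₁ C₂ : ℕ} {μ₁ μ₂ h₀ h₁ h₂ : ℝ} (hμ₂ : 0 ≤ μ₂) (hh₂ : 0 ≤ h₂)
    (i : ℕ) : Antitone (diffBound C₁ C₂ μ₁ μ₂ h₀ h₁ h₂ i) :=
  fun _ _ h => (add_le_add_iff_left _).2 (baseDiff_antitone hμ₂ hh₂ h)

theorem diffBound_step {C₁ C₂ : ℕ} {μ₁ μ₂ h₀ h₁ h₂ : ℝ} (hC₂ : 1 ≤ C₂) (hμ₁ : 0 < μ₁)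
    (hμ : μ₁ ≤ μ₂) (hh₀ : 0 ≤ h₀) {i k ℓ : ℕ} (hkl : k + 1 + ℓ = C₁) :
    (((i : ℝ) + 1) * h₀ + ((k + 1 : ℕ) : ℝ) * h₁ + (ℓ : ℝ) * h₂) / dRate C₂ μ₁ μ₂ (k + 1) ℓ
      - (((i : ℝ) + 1) * h₀ + (k : ℝ) * h₁ + ((ℓ + 1 : ℕ) : ℝ) * h₂) / dRate C₂ μ₁ μ₂ k (ℓ + 1)
      + (k : ℝ) * μ₁ / dRate C₂ μ₁ μ₂ k (ℓ + 1) * diffBound C₁ C₂ μ₁ μ₂ h₀ h₁ h₂ i ℓ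
      + ((min ℓ C₂ : ℕ) : ℝ) * μ₂ / dRate C₂ μ₁ μ₂ (k + 1) ℓ
        * diffBound C₁ C₂ μ₁ μ₂ h₀ h₁ h₂ i (ℓ - 1)
    ≤ diffBound C₁ C₂ μ₁ μ₂ h₀ h₁ h₂ (i + 1) ℓ := by
  have hC₁ : (C₁ : ℝ) = k + 1 + ℓ := by rw [← hkl]; push_cast; ring
  rcases lt_or_ge ℓ C₂ with h | h
  · have := diffBound_step_unsaturated (K := k) (L := ℓ) (I := i) (h₁ := h₁) (h₂ := h₂)
      (by positivity) (by positivity) hμ₁ hμ hh₀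
    rw [diffBound, diffBound, diffBound, baseDiff_of_le (by omega : ℓ + 1 ≤ C₂),
      baseDiff_of_le (by omega : ℓ - 1 + 1 ≤ C₂), dRate, dRate, min_eq_left h.le,
      min_eq_left (by omega : ℓ + 1 ≤ C₂), hC₁]
    push_cast
    linarith
  · obtain ⟨ℓ, rfl⟩ : ∃ ℓ', ℓ = ℓ' + 1 := ⟨ℓ - 1, by omega⟩
    have := diffBound_step_saturated (K := k) (L := ℓ + 1) (I := i) (C := C₂) (h₁ := h₁)
      (h₂ := h₂) (by positivity) (by positivity) (by exact_mod_cast hC₂) (by exact_mod_cast h)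
      hμ₁ hμ hh₀
    rw [diffBound, diffBound, diffBound, Nat.add_sub_cancel, baseDiff_of_ge (by omega),
      baseDiff_of_ge (by omega), dRate, dRate, min_eq_right h, min_eq_right (by omega), hC₁]
    push_cast at this ⊢
    linarith

namespace IsValue

variable {C₁ C₂ : ℕ} {μ₁ μ₂ h₀ h₁ h₂ : ℝ} {v : ℕ → ℕ → ℕ → ℝ}

theorem v_zero_eq (hv : IsValue C₁ C₂ μ₁ μ₂ h₀ h₁ h₂ v) (hC₂ : 1 ≤ C₂) (hμ₁ : 0 < μ₁)
    (hμ₂ : 0 < μ₂) (n : ℕ) :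
    ∀ k ℓ, k + ℓ = n → n ≤ C₁ → v 0 k ℓ = baseValue C₂ μ₁ μ₂ h₁ h₂ k ℓ := by
  induction n with
  | zero =>
    rintro k ℓ hkl -
    obtain ⟨rfl, rfl⟩ : k = 0 ∧ ℓ = 0 := by omega
    simp [hv.1, baseValue]
  | succ n ih =>
    intro k ℓ hkl hn
    have hd := dRate_pos hC₂ hμ₁ hμ₂ (k := k) (ℓ := ℓ) (by omega)
    have hleft : (k : ℝ) * μ₁ * v 0 (k - 1) ℓ = k * μ₁ * baseValue C₂ μ₁ μ₂ h₁ h₂ (k - 1) ℓ := by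
      rcases k with _ | k
      · simp
      · rw [Nat.add_sub_cancel, ih k ℓ (by omega) (by omega)]
    have hright : ((min ℓ C₂ : ℕ) : ℝ) * μ₂ * v 0 k (ℓ - 1)
        = (min ℓ C₂ : ℕ) * μ₂ * baseValue C₂ μ₁ μ₂ h₁ h₂ k (ℓ - 1) := by
      rcases ℓ with _ | ℓ
      · simp
      · rw [Nat.add_sub_cancel, ih k ℓ (by omega) (by omega)]
    calc v 0 k ℓ
        = ((k * h₁ + ℓ * h₂) + k * μ₁ * v 0 (k - 1) ℓ
            + (min ℓ C₂ : ℕ) * μ₂ * v 0 k (ℓ - 1)) / dRate C₂ μ₁ μ₂ k ℓ := by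
          rw [hv.2.1 k ℓ (by omega) (by omega)]
          ring
      _ = ((k * h₁ + ℓ * h₂) + (k * μ₁ * baseValue C₂ μ₁ μ₂ h₁ h₂ k ℓ - k * h₁)
            + ((min ℓ C₂ : ℕ) * μ₂ * baseValue C₂ μ₁ μ₂ h₁ h₂ k ℓ - ℓ * h₂))
            / dRate C₂ μ₁ μ₂ k ℓ := by
          rw [hleft, hright, mul_baseValue_pred_left hμ₁.ne',
            mul_baseValue_pred_right hC₂ hμ₂.ne']
      _ = baseValue C₂ μ₁ μ₂ h₁ h₂ k ℓ := by
          rw [div_eq_iff hd.ne', dRate]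
          ring

theorem dv_zero (hv : IsValue C₁ C₂ μ₁ μ₂ h₀ h₁ h₂ v) (hC₂ : 1 ≤ C₂) (hμ₁ : 0 < μ₁)
    (hμ₂ : 0 < μ₂) {k ℓ : ℕ} (h : k + 1 + ℓ ≤ C₁) :
    Dv v 0 (k + 1) ℓ = baseDiff C₂ μ₁ μ₂ h₁ h₂ ℓ := by
  rw [Dv, Nat.add_sub_cancel, hv.v_zero_eq hC₂ hμ₁ hμ₂ _ _ _ rfl h,
    hv.v_zero_eq hC₂ hμ₁ hμ₂ _ _ _ (by omega) h, baseValue_succ_sub]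

theorem dv_succ_le (hv : IsValue C₁ C₂ μ₁ μ₂ h₀ h₁ h₂ v) (hC₂ : 1 ≤ C₂) (hμ₁ : 0 < μ₁)
    (hμ₂ : 0 < μ₂) {i k ℓ : ℕ} (hkl : k + 1 + ℓ = C₁) {β β' : ℝ} (hββ' : β ≤ β')
    (hx : Dv v i (k + 1) ℓ ≤ β) (hy : 0 < ℓ → Dv v i (k + 2) (ℓ - 1) ≤ β')
    (hz : 0 < k → Dv v i k (ℓ + 1) ≤ β) :
    Dv v (i + 1) (k + 1) ℓ ≤
      (((i : ℝ) + 1) * h₀ + ((k + 1 : ℕ) : ℝ) * h₁ + (ℓ : ℝ) * h₂) / dRate C₂ μ₁ μ₂ (k + 1) ℓ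
      - (((i : ℝ) + 1) * h₀ + (k : ℝ) * h₁ + ((ℓ + 1 : ℕ) : ℝ) * h₂) / dRate C₂ μ₁ μ₂ k (ℓ + 1)
      + (k : ℝ) * μ₁ / dRate C₂ μ₁ μ₂ k (ℓ + 1) * β
      + ((min ℓ C₂ : ℕ) : ℝ) * μ₂ / dRate C₂ μ₁ μ₂ (k + 1) ℓ * β' := by
  have hd := dRate_pos hC₂ hμ₁ hμ₂ (k := k + 1) (ℓ := ℓ) (by omega)
  have hd' := dRate_pos hC₂ hμ₁ hμ₂ (k := k) (ℓ := ℓ + 1) (by omega)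
  have key := bellman_diff_le (a := v i (k + 1) ℓ) (b := v i k (ℓ + 1))
    (y := v i (k + 1 + 1) (ℓ - 1)) (z := v i (k - 1) (ℓ + 1 + 1))
    (dRate_coeff_add hd.ne') (dRate_coeff_add hd'.ne') (by positivity) (by positivity)
    (by simpa [Dv] using hx)
    (fun hq => by
      have hℓ : 0 < ℓ := Nat.pos_of_ne_zero fun h0 => by simp [h0] at hq
      simpa [Dv, Nat.sub_add_cancel hℓ] using hy hℓ)
    (fun hp => by
      have hk : 0 < k := Nat.pos_of_ne_zero fun h0 => by simp [h0] at hp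
      simpa [Dv] using hz hk)
    hββ'
  rw [Dv, Nat.add_sub_cancel, hv.2.2 i (k + 1) ℓ hkl, hv.2.2 i k (ℓ + 1) (by omega)]
  simp only [Nat.add_sub_cancel]
  linarith

theorem dv_le_diffBound (hv : IsValue C₁ C₂ μ₁ μ₂ h₀ h₁ h₂ v) (hC₂ : 1 ≤ C₂) (hμ₁ : 0 < μ₁)
    (hμ₂ : 0 < μ₂) (hμ : μ₁ ≤ μ₂) (hh₀ : 0 ≤ h₀) (hh₂ : 0 ≤ h₂) (i : ℕ) :
    ∀ k ℓ, k + 1 + ℓ = C₁ → Dv v i (k + 1) ℓ ≤ diffBound C₁ C₂ μ₁ μ₂ h₀ h₁ h₂ i ℓ := by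
  induction i with
  | zero =>
    intro k ℓ hkl
    simp [diffBound, hv.dv_zero hC₂ hμ₁ hμ₂ hkl.le]
  | succ i ih =>
    intro k ℓ hkl
    have hanti := diffBound_antitone (C₁ := C₁) (C₂ := C₂) (μ₁ := μ₁) (h₀ := h₀) (h₁ := h₁)
      hμ₂.le hh₂ i
    refine (hv.dv_succ_le hC₂ hμ₁ hμ₂ hkl ?_ (ih k ℓ hkl) (fun hℓ => ?_) (fun hk => ?_)).trans
      (diffBound_step hC₂ hμ₁ hμ hh₀ hkl)
    · exact hanti (Nat.sub_le ℓ 1)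
    · exact ih (k + 1) (ℓ - 1) (by omega)
    · obtain ⟨k, rfl⟩ : ∃ k', k = k' + 1 := ⟨k - 1, by omega⟩
      exact (ih k (ℓ + 1) (by omega)).trans (hanti (Nat.le_succ ℓ))

end IsValue

theorem stmt9_general
    (C₁ C₂ : ℕ) (hC₂pos : 1 ≤ C₂)
    (μ₁ μ₂ h₀ h₁ h₂ : ℝ)
    (hμ₁ : 0 < μ₁) (hμ₂ : 0 < μ₂)
    (hh₀ : 0 < h₀) (hh₂ : 0 < h₂)
    (v : ℕ → ℕ → ℕ → ℝ) (hv : IsValue C₁ C₂ μ₁ μ₂ h₀ h₁ h₂ v)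
    (hμ : μ₁ ≤ μ₂) :
    ∀ i k ℓ : ℕ, memX C₁ i k ℓ → 1 ≤ k →
      Dv v i k ℓ ≤
        (i : ℝ) * (h₀ / (C₁ : ℝ) * (1 / μ₁ - 1 / μ₂)) + (h₁ / μ₁ - h₂ / μ₂) := by
  intro i k ℓ hmem hk
  obtain ⟨k, rfl⟩ : ∃ k', k = k' + 1 := ⟨k - 1, by omega⟩
  have hb := baseDiff_le (μ₁ := μ₁) (h₁ := h₁) hC₂pos hμ₂.le hh₂.le ℓ
  rcases hmem with ⟨rfl, hkl⟩ | hkl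
  · rw [hv.dv_zero hC₂pos hμ₁ hμ₂ hkl.le]
    simpa using hb
  · have := hv.dv_le_diffBound hC₂pos hμ₁ hμ₂ hμ hh₀.le hh₂.le i k ℓ hkl
    rw [diffBound] at this
    linarith

theorem stmt9
    (C₁ C₂ : ℕ) (hC₂pos : 1 ≤ C₂) (hC : C₂ < C₁)
    (μ₁ μ₂ h₀ h₁ h₂ : ℝ)
    (hμ₁ : 0 < μ₁) (hμ₂ : 0 < μ₂)
    (hh₀ : 0 < h₀) (hh₁ : 0 < h₁) (hh₂ : 0 < h₂)
    (v : ℕ → ℕ → ℕ → ℝ) (hv : IsValue C₁ C₂ μ₁ μ₂ h₀ h₁ h₂ v)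
    (hμ : μ₁ ≤ μ₂) :
    ∀ i k ℓ : ℕ, memX C₁ i k ℓ → 1 ≤ k →
      Dv v i k ℓ ≤
        (i : ℝ) * (h₀ / (C₁ : ℝ) * (1 / μ₁ - 1 / μ₂)) + (h₁ / μ₁ - h₂ / μ₂) :=
  stmt9_general C₁ C₂ hC₂pos μ₁ μ₂ h₀ h₁ h₂ hμ₁ hμ₂ hh₀ hh₂ v hv hμ
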